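/- arXiv:1007.3024 — 4 statements merged into one kernel-verified Lean document; each statement's English description precedes it below -/
import Mathlib

section
/- Let ξ be a smooth vector field on ℝ² and f : ℝ² → ℝ a smooth function with L_ξ f > 0 everywhere. If ψ : ℝ → ℝ² is a free curve, i.e. for all t the vectors ψ'(t) and ψ''(t) are linearly independent, then for every point x ∈ ℝ² the vectors L_ξ(ψ∘f)(x) and L_ξ²(ψ∘f)(x) in ℝ² are linearly independent. -/
/-- Lie (directional) derivative of an ℝ²-valued map along a vector field on ℝ²,
taken componentwise. -/
noncomputable def lieDV (ξ : (Fin 2 → ℝ) → (Fin 2 → ℝ)) (g : (Fin 2 → ℝ) → (Fin 2 → ℝ)) :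
    (Fin 2 → ℝ) → (Fin 2 → ℝ) := fun x => fderiv ℝ g x (ξ x)

/-- Lie derivative of a scalar function. -/
noncomputable def lieDS (ξ : (Fin 2 → ℝ) → (Fin 2 → ℝ)) (g : (Fin 2 → ℝ) → ℝ) :
    (Fin 2 → ℝ) → ℝ := fun x => fderiv ℝ g x (ξ x)

/-- Chain rule formula for a composition `φ ∘ f` with `φ : ℝ → ℝ²`. -/
lemma comp_fderiv_formula (ξ : (Fin 2 → ℝ) → (Fin 2 → ℝ)) (f : (Fin 2 → ℝ) → ℝ)
    (hf : Differentiable ℝ f) (φ : ℝ → (Fin 2 → ℝ)) (hφ : Differentiable ℝ φ)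
    (y : Fin 2 → ℝ) :
    fderiv ℝ (fun z => φ (f z)) y (ξ y) = (fderiv ℝ f y (ξ y)) • deriv φ (f y) := by
  have hcomp : fderiv ℝ (φ ∘ f) y = (fderiv ℝ φ (f y)).comp (fderiv ℝ f y) :=
    fderiv_comp y (hφ (f y)) (hf y)
  have : (fun z => φ (f z)) = φ ∘ f := rfl
  rw [this, hcomp]
  simp only [ContinuousLinearMap.coe_comp', Function.comp_apply]
  rw [← fderiv_apply_one_eq_deriv]
  rw [show (fderiv ℝ f y (ξ y)) = (fderiv ℝ f y (ξ y)) • (1 : ℝ) by simp]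
  rw [map_smul]
  simp

theorem stmt1 (ξ : (Fin 2 → ℝ) → (Fin 2 → ℝ)) (f : (Fin 2 → ℝ) → ℝ)
    (hξ : ContDiff ℝ (⊤ : ℕ∞) ξ) (hf : ContDiff ℝ (⊤ : ℕ∞) f)
    (hpos : ∀ x, 0 < lieDS ξ f x)
    (ψ : ℝ → (Fin 2 → ℝ)) (hψ : ContDiff ℝ (⊤ : ℕ∞) ψ)
    (hfree : ∀ t, LinearIndependent ℝ ![deriv ψ t, deriv (deriv ψ) t]) :
    ∀ x, LinearIndependent ℝ ![lieDV ξ (ψ ∘ f) x, lieDV ξ (lieDV ξ (ψ ∘ f)) x] := by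
  intro x
  have hf' : Differentiable ℝ f := hf.differentiable (by simp)
  have hψ' : Differentiable ℝ ψ := hψ.differentiable (by simp)
  set a : (Fin 2 → ℝ) → ℝ := lieDS ξ f with ha_def
  have hψi : ContDiff ℝ (⊤ : ℕ∞) ψ := hψ.of_le (by simp)
  have hψd : ContDiff ℝ (⊤ : ℕ∞) (deriv ψ) := (contDiff_infty_iff_deriv.mp hψi).2
  have hψd' : Differentiable ℝ (deriv ψ) := hψd.differentiable (by simp)
  have ha : ContDiff ℝ (⊤ : ℕ∞) a := by
    have h1 : ContDiff ℝ (⊤ : ℕ∞) (fderiv ℝ f) := (contDiff_infty_iff_fderiv.mp (hf.of_le (by simp))).2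
    exact h1.clm_apply (hξ.of_le (by simp))
  have key1 : ∀ y, lieDV ξ (ψ ∘ f) y = a y • deriv ψ (f y) := by
    intro y
    have := comp_fderiv_formula ξ f hf' ψ hψ' y
    simpa [lieDV, lieDS, ha_def, Function.comp_def] using this
  set c := f x with hc
  set u := deriv ψ c with hu
  set v := deriv (deriv ψ) c with hv
  have hax : a x ≠ 0 := ne_of_gt (hpos x)
  set b : ℝ := fderiv ℝ a x (ξ x) with hb
  have key2 : lieDV ξ (lieDV ξ (ψ ∘ f)) x = b • u + (a x * a x) • v := by
    have heq : lieDV ξ (ψ ∘ f) = fun y => a y • deriv ψ (f y) := funext key1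
    show fderiv ℝ (lieDV ξ (ψ ∘ f)) x (ξ x) = _
    rw [heq]
    have h1 : DifferentiableAt ℝ a x := ha.differentiable (by simp) x
    have h2 : DifferentiableAt ℝ (fun y => deriv ψ (f y)) x :=
      (hψd'.comp hf') x
    rw [fderiv_fun_smul h1 h2]
    have h3 : fderiv ℝ (fun y => deriv ψ (f y)) x (ξ x) = (a x) • v :=
      comp_fderiv_formula ξ f hf' (deriv ψ) hψd' x
    simp only [ContinuousLinearMap.add_apply, ContinuousLinearMap.smul_apply,
      ContinuousLinearMap.smulRight_apply, h3, smul_smul]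
    module
  have key1x : lieDV ξ (ψ ∘ f) x = a x • u := key1 x
  rw [key1x, key2]
  have hli := hfree c
  rw [LinearIndependent.pair_iff] at hli ⊢
  intro s t hst
  have hst' : (s * a x + t * b) • u + (t * (a x * a x)) • v = 0 := by
    rw [← hst]; module
  obtain ⟨h1, h2⟩ := hli _ _ hst'
  have ht : t = 0 := (mul_eq_zero.mp h2).resolve_right (mul_ne_zero hax hax)
  subst ht
  rw [zero_mul, add_zero] at h1
  exact ⟨(mul_eq_zero.mp h1).resolve_right hax, rfl⟩
end

section
/- Let ξ be a smooth vector field on ℝ^m whose first component is identically 1, let H(x) = span{ξ(x)}, and let ψ : ℝ → ℝ² be a free map. Then F : ℝ^m → ℝ² defined by F(x) = ψ(x¹) satisfies: for every x, the vectors (L_ξ F)(x) and (L_ξ² F)(x) in ℝ² are linearly independent (i.e. F is H-free). -/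
/-- Lie (directional) derivative of an ℝ²-valued map along a vector field on ℝ^m,
taken componentwise. -/
noncomputable def lieDm (m : ℕ) (ξ : (Fin (m + 1) → ℝ) → (Fin (m + 1) → ℝ))
    (g : (Fin (m + 1) → ℝ) → (Fin 2 → ℝ)) : (Fin (m + 1) → ℝ) → (Fin 2 → ℝ) :=
  fun x => fderiv ℝ g x (ξ x)

theorem stmt4 (m : ℕ) (ξ : (Fin (m + 1) → ℝ) → (Fin (m + 1) → ℝ))
    (hξ : ContDiff ℝ (⊤ : ℕ∞) ξ) (hξ1 : ∀ x, ξ x 0 = 1)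
    (ψ : ℝ → (Fin 2 → ℝ)) (hψ : ContDiff ℝ (⊤ : ℕ∞) ψ)
    (hfree : ∀ t, LinearIndependent ℝ ![deriv ψ t, deriv (deriv ψ) t]) :
    ∀ x, LinearIndependent ℝ
      ![lieDm m ξ (fun y => ψ (y 0)) x,
        lieDm m ξ (lieDm m ξ (fun y => ψ (y 0))) x] := by
  have key : ∀ (h : ℝ → (Fin 2 → ℝ)), Differentiable ℝ h →
      lieDm m ξ (fun y => h (y 0)) = fun x => deriv h (x 0) := by
    intro h hh
    funext x
    unfold lieDm
    have hcomp : (fun y : Fin (m + 1) → ℝ => h (y 0)) =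
        h ∘ (ContinuousLinearMap.proj (R := ℝ) (φ := fun _ : Fin (m + 1) => ℝ) 0) := rfl
    rw [hcomp, fderiv_comp x (hh _) (ContinuousLinearMap.proj 0).differentiableAt]
    simp [ContinuousLinearMap.fderiv, hξ1 x, fderiv_apply_one_eq_deriv]
  have hψd : Differentiable ℝ ψ := hψ.differentiable (by simp)
  have hψ'd : Differentiable ℝ (deriv ψ) :=
    ((contDiff_infty_iff_deriv.mp (hψ.of_le (by simp))).2).differentiable (by norm_num)
  have h1 : lieDm m ξ (fun y => ψ (y 0)) = fun x => deriv ψ (x 0) := key ψ hψd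
  have h2 : lieDm m ξ (lieDm m ξ (fun y => ψ (y 0))) = fun x => deriv (deriv ψ) (x 0) := by
    rw [h1]; exact key (deriv ψ) hψ'd
  intro x
  rw [h2, h1]
  exact hfree (x 0)
end

section
/- Let ω = y dx − dz be the standard contact form on ℝ³, with the distribution H = ker ω spanned by ξ₁ = (0,1,0) and ξ₂ = (1,0,−y). Define f : ℝ³ → ℝ⁵ by f(x,y,z) = (y, x, e^y, e^x, z). Then the 5×5 matrix whose rows are L_{ξ₁} f, L_{ξ₂} f, L_{ξ₁}² f, L_{ξ₁}L_{ξ₂} f + L_{ξ₂}L_{ξ₁} f, and L_{ξ₂}² f has determinant e^{x+y}, hence is invertible at every point; therefore f is H-free. -/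
/-!
Every component of `fMap` is a coordinate or the exponential of one, so all the Lie derivatives
are explicit: `L_{ξ₁} = ∂_y`, while `L_{ξ₂} = ∂_x - y ∂_z` turns the `z`-component of `f` into
`-y`, which makes the symmetrised mixed row `(0, 0, 0, 0, -1)`. After swapping the last two
columns the matrix is upper triangular with diagonal `1, 1, e^y, -1, e^x`.
-/

/-- Componentwise Lie (directional) derivative of an ℝ⁵-valued map along a vector field
on ℝ³. -/
noncomputable def lieD5 (ξ : (Fin 3 → ℝ) → (Fin 3 → ℝ)) (g : (Fin 3 → ℝ) → (Fin 5 → ℝ)) :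
    (Fin 3 → ℝ) → (Fin 5 → ℝ) := fun x => fderiv ℝ g x (ξ x)

noncomputable def xi1 : (Fin 3 → ℝ) → (Fin 3 → ℝ) := fun _ => ![0, 1, 0]

noncomputable def xi2 : (Fin 3 → ℝ) → (Fin 3 → ℝ) := fun p => ![1, 0, -(p 1)]

noncomputable def fMap : (Fin 3 → ℝ) → (Fin 5 → ℝ) :=
  fun p => ![p 1, p 0, Real.exp (p 1), Real.exp (p 0), p 2]

/-- The 5×5 matrix with rows L_{ξ₁}f, L_{ξ₂}f, L_{ξ₁}²f,
L_{ξ₁}L_{ξ₂}f + L_{ξ₂}L_{ξ₁}f, L_{ξ₂}²f. -/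
noncomputable def Dmat (x : Fin 3 → ℝ) : Matrix (Fin 5) (Fin 5) ℝ :=
  Matrix.of ![lieD5 xi1 fMap x, lieD5 xi2 fMap x, lieD5 xi1 (lieD5 xi1 fMap) x,
    lieD5 xi1 (lieD5 xi2 fMap) x + lieD5 xi2 (lieD5 xi1 fMap) x,
    lieD5 xi2 (lieD5 xi2 fMap) x]

open ContinuousLinearMap Real

attribute [local simp] differentiableAt_apply DifferentiableAt.exp

theorem lieD5_apply {ξ : (Fin 3 → ℝ) → (Fin 3 → ℝ)} {g : (Fin 3 → ℝ) → (Fin 5 → ℝ)}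
    {x : Fin 3 → ℝ} (hg : DifferentiableAt ℝ g x) (i : Fin 5) :
    lieD5 ξ g x i = fderiv ℝ (fun p => g p i) x (ξ x) := by
  rw [lieD5, fderiv_apply hg]
  rfl

@[simp]
theorem fderiv_eval {𝕜 ι F : Type*} [NontriviallyNormedField 𝕜] [Fintype ι]
    [NormedAddCommGroup F] [NormedSpace 𝕜 F] (j : ι) (p : ι → F) :
    fderiv 𝕜 (fun q : ι → F => q j) p = proj j :=
  (hasFDerivAt_apply j p).fderiv

theorem lieD5_xi1_fMap : lieD5 xi1 fMap = fun p => ![1, 0, exp (p 1), 0, 0] := by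
  funext p i
  rw [lieD5_apply (by simp [fMap, Fin.forall_fin_succ])]
  fin_cases i <;> simp [fMap, xi1]

theorem lieD5_xi2_fMap : lieD5 xi2 fMap = fun p => ![0, 1, 0, exp (p 0), -p 1] := by
  funext p i
  rw [lieD5_apply (by simp [fMap, Fin.forall_fin_succ])]
  fin_cases i <;> simp [fMap, xi2]

theorem lieD5_xi1_lieD5_xi1_fMap :
    lieD5 xi1 (lieD5 xi1 fMap) = fun p => ![0, 0, exp (p 1), 0, 0] := by
  funext p i
  rw [lieD5_xi1_fMap, lieD5_apply (by simp [Fin.forall_fin_succ])]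
  fin_cases i <;> simp [xi1]

theorem lieD5_xi2_lieD5_xi1_fMap : lieD5 xi2 (lieD5 xi1 fMap) = 0 := by
  funext p i
  rw [lieD5_xi1_fMap, lieD5_apply (by simp [Fin.forall_fin_succ])]
  fin_cases i <;> simp [xi2]

theorem lieD5_xi1_lieD5_xi2_fMap : lieD5 xi1 (lieD5 xi2 fMap) = fun _ => ![0, 0, 0, 0, -1] := by
  funext p i
  rw [lieD5_xi2_fMap, lieD5_apply (by simp [Fin.forall_fin_succ])]
  fin_cases i <;> simp [xi1]

theorem lieD5_xi2_lieD5_xi2_fMap :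
    lieD5 xi2 (lieD5 xi2 fMap) = fun p => ![0, 0, 0, exp (p 0), 0] := by
  funext p i
  rw [lieD5_xi2_fMap, lieD5_apply (by simp [Fin.forall_fin_succ])]
  fin_cases i <;> simp [xi2]

theorem Dmat_eq (x : Fin 3 → ℝ) :
    Dmat x = !![1, 0, exp (x 1), 0, 0;
                0, 1, 0, exp (x 0), -x 1;
                0, 0, exp (x 1), 0, 0;
                0, 0, 0, 0, -1;
                0, 0, 0, exp (x 0), 0] := by
  rw [Dmat, lieD5_xi1_lieD5_xi1_fMap, lieD5_xi1_lieD5_xi2_fMap, lieD5_xi2_lieD5_xi1_fMap,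
    lieD5_xi2_lieD5_xi2_fMap, lieD5_xi1_fMap, lieD5_xi2_fMap]
  ext i j
  fin_cases i <;> fin_cases j <;> simp

theorem det_Dmat (x : Fin 3 → ℝ) : (Dmat x).det = exp (x 0 + x 1) := by
  rw [Dmat_eq, exp_add]
  simp [Matrix.det_succ_row_zero, Fin.sum_univ_succ]
  ring

theorem stmt8 : ∀ x : Fin 3 → ℝ,
    (Dmat x).det = Real.exp (x 0 + x 1) ∧ IsUnit (Dmat x) := by
  intro x
  refine ⟨det_Dmat x, (Matrix.isUnit_iff_isUnit_det _).mpr ?_⟩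
  rw [det_Dmat]
  exact (exp_pos _).ne'.isUnit
end

section
/- Let g₁,...,g_n : M → ℝ be smooth functions that are strictly positive at every point, and let ψ_i = (a_i, b_i) : ℝ → ℝ² be free maps with Dψ_i = a_i' b_i'' − a_i'' b_i' never zero. Then the block upper-triangular square matrix of size n + n(n+1)/2 whose diagonal blocks are the 2×2 matrices A_i = [[a_i'(f^i)g_i, b_i'(f^i)g_i],[a_i'(f^i)c_i + a_i''(f^i)g_i², b_i'(f^i)c_i + b_i''(f^i)g_i²]] (for arbitrary real c_i) followed by 1×1 blocks 2 g_j g_k (j < k), has determinant 2^{n(n−1)/2} · Π_i (g_i^{n+2} · Dψ_i(f^i)) ≠ 0, using det A_i = g_i³ Dψ_i(f^i). -/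
open Finset

private lemma aux_card (n : ℕ) :
    (Finset.univ.filter (fun p : Fin n × Fin n => p.1 < p.2)).card = n * (n - 1) / 2 := by
  classical
  have hswap : (Finset.univ.filter (fun p : Fin n × Fin n => p.1 < p.2)).card
      = (Finset.univ.filter (fun p : Fin n × Fin n => p.2 < p.1)).card := by
    rw [← Finset.card_image_of_injective
      (Finset.univ.filter (fun p : Fin n × Fin n => p.1 < p.2)) Prod.swap_injective]
    congr 1
    ext p
    simp only [Finset.mem_image, Finset.mem_filter, Finset.mem_univ, true_and]
    constructor
    · rintro ⟨q, hq, rfl⟩; simpa using hq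
    · intro hp; exact ⟨p.swap, by simpa using hp, by simp⟩
  have hpart := Finset.card_filter_add_card_filter_not
    (s := (Finset.univ : Finset (Fin n × Fin n))) (p := fun p => p.1 = p.2)
  have hdiag : (Finset.univ.filter (fun p : Fin n × Fin n => p.1 = p.2)).card = n := by
    rw [show (Finset.univ.filter (fun p : Fin n × Fin n => p.1 = p.2))
        = (Finset.univ : Finset (Fin n)).image (fun i => (i, i)) from ?_]
    · rw [Finset.card_image_of_injective _ (fun i j h => ((Prod.mk.injEq _ _ _ _).mp h).1)]
      simp
    · ext p
      simp only [Finset.mem_filter, Finset.mem_univ, true_and, Finset.mem_image]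
      constructor
      · intro h
        obtain ⟨x, y⟩ := p
        cases h
        exact ⟨x, by simp⟩
      · rintro ⟨i, _, rfl⟩; rfl
  have hne : (Finset.univ.filter (fun p : Fin n × Fin n => ¬ p.1 = p.2))
      = (Finset.univ.filter (fun p : Fin n × Fin n => p.1 < p.2))
        ∪ (Finset.univ.filter (fun p : Fin n × Fin n => p.2 < p.1)) := by
    ext p
    simp only [Finset.mem_filter, Finset.mem_univ, true_and, Finset.mem_union]
    constructor
    · intro h; rcases lt_or_gt_of_ne h with h' | h'
      · exact Or.inl h'
      · exact Or.inr h'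
    · rintro (h | h)
      · exact h.ne
      · exact h.ne'
  have hdisj : Disjoint (Finset.univ.filter (fun p : Fin n × Fin n => p.1 < p.2))
      (Finset.univ.filter (fun p : Fin n × Fin n => p.2 < p.1)) := by
    rw [Finset.disjoint_left]
    intro p hp hq
    simp only [Finset.mem_filter] at hp hq
    exact absurd hq.2 (not_lt_of_gt hp.2)
  rw [hne, Finset.card_union_of_disjoint hdisj, hdiag] at hpart
  have hcard : (Finset.univ : Finset (Fin n × Fin n)).card = n * n := by
    simp
  rw [hcard] at hpart
  have hmp : n * (n - 1) = n * n - n := by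
    rw [← Nat.pred_eq_sub_one, Nat.mul_pred]
  omega

private lemma aux_prod (n : ℕ) (g : Fin n → ℝ) (hg : ∀ i, 0 < g i) :
    (∏ p : Fin n × Fin n, (if p.1 < p.2 then g p.1 * g p.2 else 1))
      = ∏ i, g i ^ (n - 1) := by
  classical
  set T := ∏ p : Fin n × Fin n, (if p.1 < p.2 then g p.1 * g p.2 else 1) with hT
  set R := ∏ i : Fin n, g i ^ (n - 1) with hR
  have hswap : T = ∏ p : Fin n × Fin n, (if p.2 < p.1 then g p.1 * g p.2 else 1) := by
    rw [hT]
    exact Fintype.prod_equiv (Equiv.prodComm _ _) _ _ (fun p => by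
      show (if p.1 < p.2 then g p.1 * g p.2 else 1) = (if p.1 < p.2 then g p.2 * g p.1 else 1)
      rcases lt_or_ge p.1 p.2 with h | h
      · rw [if_pos h, if_pos h, mul_comm]
      · rw [if_neg (not_lt.2 h), if_neg (not_lt.2 h)])
  have hsq : T * T = ∏ p : Fin n × Fin n, (if p.1 = p.2 then 1 else g p.1 * g p.2) := by
    nth_rewrite 2 [hswap]
    rw [hT, ← Finset.prod_mul_distrib]
    apply Finset.prod_congr rfl
    intro p _
    rcases lt_trichotomy p.1 p.2 with h | h | h
    · rw [if_pos h, if_neg (asymm h), if_neg h.ne, mul_one]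
    · rw [if_neg (by rw [h]; exact lt_irrefl _), if_neg (by rw [h]; exact lt_irrefl _),
        if_pos h, mul_one]
    · rw [if_neg (asymm h), if_pos h, if_neg h.ne', one_mul]
  have h3 : (∏ p : Fin n × Fin n, (if p.1 = p.2 then g p.1 * g p.2 else 1))
      * (∏ p : Fin n × Fin n, (if p.1 = p.2 then 1 else g p.1 * g p.2))
      = ∏ p : Fin n × Fin n, (g p.1 * g p.2) := by
    rw [← Finset.prod_mul_distrib]
    apply Finset.prod_congr rfl
    intro p _
    by_cases h : p.1 = p.2 <;> simp [h]
  have h1 : ∏ p : Fin n × Fin n, (g p.1 * g p.2) = (∏ i, g i) ^ n * (∏ i, g i) ^ n := by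
    rw [Fintype.prod_prod_type]
    simp [Finset.prod_mul_distrib, Finset.prod_const, Finset.prod_pow, Finset.card_univ,
      mul_pow]
  have h2 : ∏ p : Fin n × Fin n, (if p.1 = p.2 then g p.1 * g p.2 else 1)
      = ∏ i, g i ^ 2 := by
    rw [Fintype.prod_prod_type]
    apply Finset.prod_congr rfl
    intro i _
    rw [Finset.prod_ite_eq univ i (fun j => g i * g j), if_pos (Finset.mem_univ i), sq]
  have hL : T * T * (∏ i, g i ^ 2) = (∏ i, g i) ^ n * (∏ i, g i) ^ n := by
    rw [hsq, ← h2, mul_comm, h3, h1]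
  have hRside : R * R * (∏ i, g i ^ 2) = (∏ i, g i) ^ n * (∏ i, g i) ^ n := by
    rw [hR, ← Finset.prod_pow]
    simp only [← Finset.prod_mul_distrib]
    refine Finset.prod_congr rfl fun i _ => ?_
    have := i.pos
    rw [← pow_add, ← pow_add, ← pow_add]
    congr 1
    omega
  have hgprodpos : (0:ℝ) < ∏ i, g i ^ 2 :=
    Finset.prod_pos fun i _ => pow_pos (hg i) 2
  have hTR : T * T = R * R :=
    mul_right_cancel₀ (ne_of_gt hgprodpos) (hL.trans hRside.symm)
  have hTpos : 0 ≤ T := by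
    rw [hT]
    apply Finset.prod_nonneg
    intro p _
    by_cases h : p.1 < p.2 <;> simp [h]
    exact le_of_lt (mul_pos (hg _) (hg _))
  have hRnonneg : 0 ≤ R := Finset.prod_nonneg fun i _ => le_of_lt (pow_pos (hg i) _)
  exact (mul_self_inj hTpos hRnonneg).mp hTR

set_option maxHeartbeats 1000000 in
theorem stmt16 (n : ℕ) (a b : Fin n → ℝ → ℝ) (fv c g : Fin n → ℝ)
    (ha : ∀ i, ContDiff ℝ (⊤ : ℕ∞) (a i)) (hb : ∀ i, ContDiff ℝ (⊤ : ℕ∞) (b i))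
    (hg : ∀ i, 0 < g i)
    (hfree : ∀ i t,
      deriv (a i) t * deriv (deriv (b i)) t - deriv (deriv (a i)) t * deriv (b i) t ≠ 0)
    (A : Fin n → Matrix (Fin 2) (Fin 2) ℝ)
    (hA : ∀ i, A i =
      !![deriv (a i) (fv i) * g i, deriv (b i) (fv i) * g i;
         deriv (a i) (fv i) * c i + deriv (deriv (a i)) (fv i) * (g i) ^ 2,
         deriv (b i) (fv i) * c i + deriv (deriv (b i)) (fv i) * (g i) ^ 2])
    (M : Matrix ((Fin n × Fin 2) ⊕ {p : Fin n × Fin n // p.1 < p.2})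
                ((Fin n × Fin 2) ⊕ {p : Fin n × Fin n // p.1 < p.2}) ℝ)
    (hdiagB : ∀ i r s, M (.inl (i, r)) (.inl (i, s)) = A i r s)
    (hlowBB : ∀ i j r s, j < i → M (.inl (i, r)) (.inl (j, s)) = 0)
    (hlowSB : ∀ p i r, M (.inr p) (.inl (i, r)) = 0)
    (hdiagS : ∀ p : {p : Fin n × Fin n // p.1 < p.2},
      M (.inr p) (.inr p) = 2 * g p.1.1 * g p.1.2)
    (hlowSS : ∀ p q : {p : Fin n × Fin n // p.1 < p.2},
      (q.1.1 < p.1.1 ∨ (q.1.1 = p.1.1 ∧ q.1.2 < p.1.2)) → M (.inr p) (.inr q) = 0) :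
    (∀ i, (A i).det = (g i) ^ 3 *
      (deriv (a i) (fv i) * deriv (deriv (b i)) (fv i)
        - deriv (deriv (a i)) (fv i) * deriv (b i) (fv i))) ∧
    M.det = 2 ^ (n * (n - 1) / 2) *
      ∏ i, (g i) ^ (n + 2) *
        (deriv (a i) (fv i) * deriv (deriv (b i)) (fv i)
          - deriv (deriv (a i)) (fv i) * deriv (b i) (fv i)) ∧
    M.det ≠ 0 := by
  classical
  set D : Fin n → ℝ := fun i =>
    deriv (a i) (fv i) * deriv (deriv (b i)) (fv i)
      - deriv (deriv (a i)) (fv i) * deriv (b i) (fv i) with hDdef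
  have hdetA : ∀ i, (A i).det = (g i) ^ 3 * D i := by
    intro i
    rw [hA i, Matrix.det_fin_two_of, hDdef]
    ring
  let bl : ((Fin n × Fin 2) ⊕ {p : Fin n × Fin n // p.1 < p.2})
      → Lex (Fin n ⊕ (Fin n ×ₗ Fin n)) := fun x =>
    match x with
    | .inl (i, _) => toLex (Sum.inl i)
    | .inr p => toLex (Sum.inr (toLex p.1))
  have hbt : M.BlockTriangular bl := by
    rintro (⟨i, r⟩ | p) (⟨j, s⟩ | q) hlt
    · exact hlowBB i j r s (by simpa [bl] using hlt)
    · exact absurd hlt (by simp [bl])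
    · exact hlowSB p j s
    · refine hlowSS p q ?_
      have h' : toLex (q.1 : Fin n × Fin n) < toLex (p.1 : Fin n × Fin n) := by
        simpa [bl] using hlt
      exact Prod.lex_iff.mp h'
  have hblockA : ∀ i : Fin n,
      (M.toSquareBlock bl (toLex (Sum.inl i))).det = (A i).det := by
    intro i
    have key : ∀ x, bl x = toLex (Sum.inl i) → ∃ r : Fin 2, x = Sum.inl (i, r) := by
      rintro (⟨j, r⟩ | p) h
      · refine ⟨r, ?_⟩
        have hji : j = i := by simpa [bl] using h
        rw [hji]
      · exact absurd h (by simp [bl])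
    let e : Fin 2 ≃ {x // bl x = toLex (Sum.inl i)} :=
      { toFun := fun r => ⟨Sum.inl (i, r), rfl⟩
        invFun := fun x => (key x.1 x.2).choose
        left_inv := by
          intro r
          have hs := (key (Sum.inl (i, r)) rfl).choose_spec
          have := (Sum.inl.injEq _ _).mp hs
          exact ((Prod.mk.injEq _ _ _ _).mp this).2.symm
        right_inv := by
          intro x
          have hs := (key x.1 x.2).choose_spec
          exact Subtype.ext hs.symm }
    rw [← Matrix.det_submatrix_equiv_self e]
    congr 1
    ext r s
    simp only [Matrix.submatrix_apply, Matrix.toSquareBlock_def, Matrix.of_apply, e,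
      Equiv.coe_fn_mk]
    exact hdiagB i r s
  have hblockS : ∀ p : Fin n × Fin n,
      (M.toSquareBlock bl (toLex (Sum.inr (toLex p)))).det
        = (if p.1 < p.2 then 2 * g p.1 * g p.2 else 1) := by
    intro p
    by_cases hp : p.1 < p.2
    · rw [if_pos hp]
      have key : ∀ x, bl x = toLex (Sum.inr (toLex p)) → x = Sum.inr ⟨p, hp⟩ := by
        rintro (⟨j, r⟩ | q) h
        · exact absurd h (by simp [bl])
        · have hq : q.1 = p := by simpa [bl] using h
          exact congrArg Sum.inr (Subtype.ext hq)
      letI : Unique {x // bl x = toLex (Sum.inr (toLex p))} :=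
        { default := ⟨Sum.inr ⟨p, hp⟩, rfl⟩
          uniq := fun x => Subtype.ext (key x.1 x.2) }
      rw [Matrix.det_unique]
      exact hdiagS ⟨p, hp⟩
    · rw [if_neg hp]
      have : IsEmpty {x // bl x = toLex (Sum.inr (toLex p))} := by
        constructor
        rintro ⟨(⟨j, r⟩ | q), h⟩
        · exact absurd h (by simp [bl])
        · have hq : q.1 = p := by simpa [bl] using h
          exact hp (hq ▸ q.2)
      exact Matrix.det_isEmpty
  have hdet : M.det = (∏ i, (A i).det)
      * ∏ p : Fin n × Fin n, (if p.1 < p.2 then 2 * g p.1 * g p.2 else 1) := by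
    rw [hbt.det_fintype]
    rw [← Equiv.prod_comp (toLex : (Fin n ⊕ (Fin n ×ₗ Fin n)) ≃ _)
      (fun k => (M.toSquareBlock bl k).det)]
    rw [Fintype.prod_sum_type]
    refine congrArg₂ (· * ·) ?_ ?_
    · exact Finset.prod_congr rfl fun i _ => hblockA i
    · rw [← Equiv.prod_comp (toLex : (Fin n × Fin n) ≃ (Fin n ×ₗ Fin n))
        (fun q => (M.toSquareBlock bl (toLex (Sum.inr q))).det)]
      exact Finset.prod_congr rfl fun p _ => hblockS p
  have hsplit2 : (∏ p : Fin n × Fin n, (if p.1 < p.2 then 2 * g p.1 * g p.2 else 1))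
      = 2 ^ (n * (n - 1) / 2) * ∏ i, g i ^ (n - 1) := by
    have hpt : ∀ p : Fin n × Fin n, (if p.1 < p.2 then 2 * g p.1 * g p.2 else 1)
        = (if p.1 < p.2 then (2:ℝ) else 1) * (if p.1 < p.2 then g p.1 * g p.2 else 1) := by
      intro p
      by_cases h : p.1 < p.2 <;> simp [h] <;> ring
    rw [Finset.prod_congr rfl (fun p _ => hpt p), Finset.prod_mul_distrib,
      Finset.prod_ite, Finset.prod_const, Finset.prod_const_one, mul_one,
      aux_card, aux_prod n g hg]
  have hmain : M.det = 2 ^ (n * (n - 1) / 2) * ∏ i, (g i) ^ (n + 2) * D i := by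
    rw [hdet, hsplit2, Finset.prod_congr rfl (fun i _ => hdetA i)]
    have hfold : (∏ i, (g i) ^ 3 * D i) * (∏ i, g i ^ (n - 1))
        = ∏ i, (g i) ^ (n + 2) * D i := by
      rw [← Finset.prod_mul_distrib]
      refine Finset.prod_congr rfl fun i _ => ?_
      have hn : 0 < n := i.pos
      rw [mul_right_comm, ← pow_add, show 3 + (n - 1) = n + 2 from by omega]
    rw [show (∏ i, (g i) ^ 3 * D i)
          * (2 ^ (n * (n - 1) / 2) * ∏ i, g i ^ (n - 1))
        = (2:ℝ) ^ (n * (n - 1) / 2)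
          * ((∏ i, (g i) ^ 3 * D i) * ∏ i, g i ^ (n - 1)) from by ring, hfold]
  refine ⟨hdetA, hmain, ?_⟩
  rw [hmain]
  apply mul_ne_zero (pow_ne_zero _ two_ne_zero)
  rw [Finset.prod_ne_zero_iff]
  intro i _
  exact mul_ne_zero (pow_ne_zero _ (ne_of_gt (hg i))) (hfree i (fv i))
end
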